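/- Let 0 < q_l < q_h and define p_l* = q_l·(q_h − q_l)/(4·q_h − q_l) and p_h* = 2·q_h·(q_h − q_l)/(4·q_h − q_l). Then p_l* is the unique global maximizer over p ∈ ℝ of p·((p_h* − p)/(q_h − q_l) − p/q_l), and p_h* is the unique global maximizer over p ∈ ℝ of p·(1 − (p − p_l*)/(q_h − q_l)); moreover the resulting revenues satisfy p_l*·((p_h* − p_l*)/(q_h − q_l) − p_l*/q_l) = q_l·q_h·(q_h − q_l)/(4·q_h − q_l)² and p_h*·(1 − (p_h* − p_l*)/(q_h − q_l)) = 4·q_h²·(q_h − q_l)/(4·q_h − q_l)². -/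

import Mathlib

/-!
Given the rival's price, each firm's revenue is a concave quadratic in its own price, so it
differs from its value at the vertex by a positive multiple of the squared distance to the
vertex: the vertex is the unique best response. For the low-quality firm the vertex is
`q_l p_h / (2 q_h)`, for the high-quality firm it is `(q_h - q_l + p_l) / 2`, and the stated
prices are exactly the solution of this pair of linear equations.
-/

namespace QualityDuopoly

noncomputable def lowRevenue (ql qh ph p : ℝ) : ℝ := p * ((ph - p) / (qh - ql) - p / ql)

noncomputable def highRevenue (ql qh pl p : ℝ) : ℝ := p * (1 - (p - pl) / (qh - ql))

theorem le_of_sub_eq_mul_sq {f : ℝ → ℝ} {a x : ℝ} (ha : 0 ≤ a)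
    (hf : ∀ p, f x - f p = a * (p - x) ^ 2) (p : ℝ) : f p ≤ f x := by
  have := hf p
  nlinarith [mul_nonneg ha (sq_nonneg (p - x))]

theorem eq_of_sub_eq_mul_sq {f : ℝ → ℝ} {a x : ℝ} (ha : a ≠ 0)
    (hf : ∀ p, f x - f p = a * (p - x) ^ 2) {p : ℝ} (hp : f p = f x) : p = x := by
  have hsq : a * (p - x) ^ 2 = 0 := by rw [← hf p, hp, sub_self]
  simpa [ha, sub_eq_zero] using hsq

theorem lowRevenue_sub_lowRevenue {ql qh ph x : ℝ} (hql : ql ≠ 0) (hqh : qh ≠ 0)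
    (hlh : qh - ql ≠ 0) (hx : 2 * qh * x = ql * ph) (p : ℝ) :
    lowRevenue ql qh ph x - lowRevenue ql qh ph p = qh / ((qh - ql) * ql) * (p - x) ^ 2 := by
  obtain rfl : x = ql * ph / (2 * qh) := by rw [← hx]; field_simp
  unfold lowRevenue
  field_simp
  ring

theorem highRevenue_sub_highRevenue {ql qh pl x : ℝ} (hlh : qh - ql ≠ 0)
    (hx : 2 * x = qh - ql + pl) (p : ℝ) :
    highRevenue ql qh pl x - highRevenue ql qh pl p = 1 / (qh - ql) * (p - x) ^ 2 := by
  obtain rfl : x = (qh - ql + pl) / 2 := by rw [← hx]; ring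
  unfold highRevenue
  field_simp
  ring

end QualityDuopoly

open QualityDuopoly in
theorem equilibrium_prices_and_utilities
    (ql qh : ℝ) (hql : 0 < ql) (hlh : ql < qh) :
    (∀ p : ℝ, p * (((2 * qh * (qh - ql) / (4 * qh - ql)) - p) / (qh - ql) - p / ql)
        ≤ (ql * (qh - ql) / (4 * qh - ql)) *
          (((2 * qh * (qh - ql) / (4 * qh - ql)) - (ql * (qh - ql) / (4 * qh - ql))) / (qh - ql)
            - (ql * (qh - ql) / (4 * qh - ql)) / ql)) ∧
    (∀ p : ℝ, p * (((2 * qh * (qh - ql) / (4 * qh - ql)) - p) / (qh - ql) - p / ql)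
        = (ql * (qh - ql) / (4 * qh - ql)) *
          (((2 * qh * (qh - ql) / (4 * qh - ql)) - (ql * (qh - ql) / (4 * qh - ql))) / (qh - ql)
            - (ql * (qh - ql) / (4 * qh - ql)) / ql)
        → p = ql * (qh - ql) / (4 * qh - ql)) ∧
    (∀ p : ℝ, p * (1 - (p - (ql * (qh - ql) / (4 * qh - ql))) / (qh - ql))
        ≤ (2 * qh * (qh - ql) / (4 * qh - ql)) *
          (1 - ((2 * qh * (qh - ql) / (4 * qh - ql)) - (ql * (qh - ql) / (4 * qh - ql))) / (qh - ql))) ∧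
    (∀ p : ℝ, p * (1 - (p - (ql * (qh - ql) / (4 * qh - ql))) / (qh - ql))
        = (2 * qh * (qh - ql) / (4 * qh - ql)) *
          (1 - ((2 * qh * (qh - ql) / (4 * qh - ql)) - (ql * (qh - ql) / (4 * qh - ql))) / (qh - ql))
        → p = 2 * qh * (qh - ql) / (4 * qh - ql)) ∧
    (ql * (qh - ql) / (4 * qh - ql)) *
        (((2 * qh * (qh - ql) / (4 * qh - ql)) - (ql * (qh - ql) / (4 * qh - ql))) / (qh - ql)
          - (ql * (qh - ql) / (4 * qh - ql)) / ql)
      = ql * qh * (qh - ql) / (4 * qh - ql) ^ 2 ∧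
    (2 * qh * (qh - ql) / (4 * qh - ql)) *
        (1 - ((2 * qh * (qh - ql) / (4 * qh - ql)) - (ql * (qh - ql) / (4 * qh - ql))) / (qh - ql))
      = 4 * qh ^ 2 * (qh - ql) / (4 * qh - ql) ^ 2 := by
  have hd : 0 < qh - ql := by linarith
  -- in the form `field_simp` normalizes `4 * qh - ql` to
  have hD : qh * 4 - ql ≠ 0 := by linarith
  have hqh : 0 < qh := by linarith
  have hlow := lowRevenue_sub_lowRevenue (ph := 2 * qh * (qh - ql) / (4 * qh - ql))
    (x := ql * (qh - ql) / (4 * qh - ql)) hql.ne' hqh.ne' hd.ne' (by field_simp)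
  have hhigh := highRevenue_sub_highRevenue (pl := ql * (qh - ql) / (4 * qh - ql))
    (x := 2 * qh * (qh - ql) / (4 * qh - ql)) hd.ne' (by field_simp; ring)
  have hlow_pos : 0 < qh / ((qh - ql) * ql) := by positivity
  refine ⟨le_of_sub_eq_mul_sq hlow_pos.le hlow, fun p ↦ eq_of_sub_eq_mul_sq hlow_pos.ne' hlow,
    le_of_sub_eq_mul_sq (by positivity) hhigh, fun p ↦ eq_of_sub_eq_mul_sq (by positivity) hhigh,
    ?_, ?_⟩ <;>
  · field_simp
    ring
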